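/- Let T be the Tribonacci sequence and ψ the real root of X³−X²−X−1. Then lim_{n→∞} T(n+1)/T(n) = ψ. -/

import Mathlib

/-!
Write `ψ³ - ψ² - ψ - 1 = (X - ψ)(X² + pX + q)` with `p = ψ - 1`, `q = ψ² - ψ - 1`.
The error `yₙ = T(n+1) - ψ T(n)` then satisfies `y(n+2) = -p y(n+1) - q yₙ`, whose characteristic
roots are the two complex conjugate roots of the cubic, of modulus `√q = ψ^(-1/2) < 1`.
Concretely the positive definite form `a² + pab + qb²` evaluated at `(y(n+1), yₙ)` is multiplied by
`q` at each step, so `yₙ → 0`, and `T(n+1)/T(n) = ψ + yₙ/T(n) → ψ` because `T(n) ≥ 1`.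
-/

def trib : ℕ → ℕ
  | 0 => 0
  | 1 => 1
  | 2 => 1
  | (n+3) => trib (n+2) + trib (n+1) + trib n

open Filter Topology

section SecondOrderRecurrence

variable {p q : ℝ} {y : ℕ → ℝ}

lemma recurrence_quadForm_eq_pow_mul (hy : ∀ n, y (n + 2) = -p * y (n + 1) - q * y n) (n : ℕ) :
    y (n + 1) ^ 2 + p * y (n + 1) * y n + q * y n ^ 2 =
      q ^ n * (y 1 ^ 2 + p * y 1 * y 0 + q * y 0 ^ 2) := by
  induction n with
  | zero => ring
  | succ n ih =>
    rw [hy, pow_succ']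
    linear_combination q * ih

theorem tendsto_zero_of_recurrence (hpq : p ^ 2 < 4 * q) (hq : q < 1)
    (hy : ∀ n, y (n + 2) = -p * y (n + 1) - q * y n) : Tendsto y atTop (𝓝 0) := by
  have hd : 0 < 4 * q - p ^ 2 := by linarith
  have hq0 : 0 < q := by nlinarith [sq_nonneg p]
  set C := 4 * (y 1 ^ 2 + p * y 1 * y 0 + q * y 0 ^ 2) / (4 * q - p ^ 2)
  have hbound : ∀ n, y n ^ 2 ≤ C * q ^ n := fun n => by
    rw [div_mul_eq_mul_div, le_div_iff₀ hd, mul_assoc, mul_comm _ (q ^ n),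
      ← recurrence_quadForm_eq_pow_mul hy n]
    nlinarith [sq_nonneg (2 * y (n + 1) + p * y n)]
  have hsq : Tendsto (fun n => y n ^ 2) atTop (𝓝 0) := by
    have hgeom := (tendsto_pow_atTop_nhds_zero_of_lt_one hq0.le hq).const_mul C
    rw [mul_zero] at hgeom
    exact squeeze_zero (fun n => sq_nonneg _) hbound hgeom
  rw [tendsto_zero_iff_abs_tendsto_zero]
  simpa [Real.sqrt_sq_eq_abs, Function.comp_def] using hsq.sqrt

end SecondOrderRecurrence

lemma trib_add_three_cast (n : ℕ) :
    (trib (n + 3) : ℝ) = trib (n + 2) + trib (n + 1) + trib n := by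
  push_cast [trib]
  rfl

lemma one_le_trib : ∀ {n : ℕ}, 1 ≤ n → 1 ≤ trib n
  | 1, _ => le_rfl
  | 2, _ => le_rfl
  | n + 3, _ => by
    have := one_le_trib (n := n + 2) (by omega)
    simp only [trib]
    omega

lemma tribonacci_root_bounds {ψ : ℝ} (hψ : ψ ^ 3 = ψ ^ 2 + ψ + 1) : 5 / 3 < ψ ∧ ψ < 2 := by
  constructor <;> nlinarith [sq_nonneg (ψ - 1), sq_nonneg (ψ + 1), sq_nonneg (ψ - 2)]

lemma trib_error_recurrence {ψ : ℝ} (hψ : ψ ^ 3 = ψ ^ 2 + ψ + 1) (n : ℕ) :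
    (trib (n + 3) - ψ * trib (n + 2) : ℝ) =
      -(ψ - 1) * (trib (n + 2) - ψ * trib (n + 1)) -
        (ψ ^ 2 - ψ - 1) * (trib (n + 1) - ψ * trib n) := by
  rw [trib_add_three_cast]
  linear_combination (-(trib n : ℝ)) * hψ

theorem stmt_16 (ψ : ℝ) (hψ : ψ^3 = ψ^2 + ψ + 1) :
    Filter.Tendsto (fun n : ℕ => (trib (n+1) : ℝ) / (trib n : ℝ))
      Filter.atTop (nhds ψ) := by
  obtain ⟨hlo, hhi⟩ := tribonacci_root_bounds hψ
  have herror : Tendsto (fun n => (trib (n + 1) - ψ * trib n : ℝ)) atTop (𝓝 0) :=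
    tendsto_zero_of_recurrence (p := ψ - 1) (q := ψ ^ 2 - ψ - 1) (by nlinarith) (by nlinarith)
      (trib_error_recurrence hψ)
  have hrel : Tendsto (fun n => (trib (n + 1) - ψ * trib n : ℝ) / trib n) atTop (𝓝 0) := by
    refine squeeze_zero_norm' ?_ (tendsto_zero_iff_norm_tendsto_zero.mp herror)
    filter_upwards [eventually_ge_atTop 1] with n hn
    rw [norm_div]
    exact div_le_self (norm_nonneg _) (by simpa using one_le_trib hn)
  refine (by simpa using hrel.const_add ψ : Tendsto _ atTop (𝓝 ψ)).congr' ?_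
  filter_upwards [eventually_ge_atTop 1] with n hn
  have : (trib n : ℝ) ≠ 0 := by exact_mod_cast Nat.one_le_iff_ne_zero.mp (one_le_trib hn)
  field_simp
  ring
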